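/- Let N be an odd positive integer and let σ be the Weil-Petersson form on ℤ^n of an ideal triangulation. Then the N-kernel Ker_N σ = {α : ∀β, σ(α,β) ∈ Nℤ} equals the preimage in ℤ^n of the ℤ/N-submodule of (ℤ/N)^n freely generated by the reductions of (1,1,…,1) and of (k_{i1},…,k_{in}) for i = 1,…,p-1. -/

import Mathlib

/-- A combinatorial model (oriented combinatorial map) of an ideal triangulation of a closed
orientable surface of genus `g` with `p` punctures, having `n` edges.  The darts `D` are the
corners (spikes) of the triangles; `φ` is the rotation moving counterclockwise to the next
corner of the same triangle (faces are triangles), `α` is the fixed-point-free involution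
pairing the two sides of each edge, `edge` labels each dart by the edge of the triangulation
on its left, and `vert` records the puncture towards which the spike converges (orbits of the
vertex rotation `φ ∘ α`).  Connectivity and the Euler relation `p - n + F = 2 - 2g` make this
the triangulation of the genus `g` surface with `p` punctures. -/
structure IdealTriangulation (g p n : ℕ) where
  D : Type
  [fintypeD : Fintype D]
  [decEqD : DecidableEq D]
  α : Equiv.Perm D
  φ : Equiv.Perm D
  α_invol : ∀ d, α (α d) = d
  α_fpf : ∀ d, α d ≠ d
  φ_triangles : ∀ d, φ (φ (φ d)) = d
  φ_fpf : ∀ d, φ d ≠ d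
  edge : D → Fin n
  edge_surj : Function.Surjective edge
  edge_fiber : ∀ d d', edge d = edge d' ↔ (d' = d ∨ d' = α d)
  vert : D → Fin p
  vert_surj : Function.Surjective vert
  vert_rot : ∀ d, vert (φ (α d)) = vert d
  vert_orbit : ∀ d d', vert d = vert d' → ∃ k : ℕ, ((α.trans φ) ^ k) d = d'
  connected : ∀ d d', ∃ w ∈ Subgroup.closure ({α, φ} : Set (Equiv.Perm D)), w d = d'
  card_darts : Fintype.card D = 2 * n
  euler : (p : ℤ) - (n : ℤ) + (Fintype.card D : ℤ) / 3 = 2 - 2 * (g : ℤ)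

attribute [instance] IdealTriangulation.fintypeD IdealTriangulation.decEqD

/-- The number `a_ij` of spikes delimited on the left by edge `i` and on the right by
edge `j`. -/
noncomputable def IdealTriangulation.spikeCount {g p n : ℕ} (T : IdealTriangulation g p n)
    (i j : Fin n) : ℕ :=
  (Finset.univ.filter (fun d => T.edge d = i ∧ T.edge (T.φ d) = j)).card

/-- The Weil–Petersson matrix `σ_ij = a_ij - a_ji` of an ideal triangulation. -/
noncomputable def IdealTriangulation.wpMatrix {g p n : ℕ} (T : IdealTriangulation g p n) :
    Matrix (Fin n) (Fin n) ℤ :=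
  Matrix.of fun i j => (T.spikeCount i j : ℤ) - (T.spikeCount j i : ℤ)


/-- The bilinear Weil–Petersson form `σ(α, β) = Σ_{i,j} α_i σ_ij β_j` on `ℤⁿ`. -/
noncomputable def IdealTriangulation.wpForm {g p n : ℕ} (T : IdealTriangulation g p n)
    (x y : Fin n → ℤ) : ℤ :=
  ∑ i : Fin n, ∑ j : Fin n, x i * T.wpMatrix i j * y j

/-- `k_{ij} ∈ {0,1,2}` is the number of ends of the edge `λ_j` converging to the `i`-th
puncture. -/
noncomputable def IdealTriangulation.endCount {g p n : ℕ} (T : IdealTriangulation g p n)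
    (i : Fin p) (j : Fin n) : ℕ :=
  (Finset.univ.filter (fun d => T.vert d = i ∧ T.edge d = j)).card

/-- The family of `p` vectors generating the kernel of the Weil–Petersson form:
the vectors `(k_{i1}, …, k_{in})` for `i = 1, …, p-1` together with `(1, 1, …, 1)`. -/
noncomputable def IdealTriangulation.kerGens {g p n : ℕ} (T : IdealTriangulation g p n)
    (i : Fin p) : Fin n → ℤ :=
  if i.val + 1 < p then (fun j => (T.endCount i j : ℤ)) else (fun _ => 1)

/-- The reductions mod `N` of the kernel generators. -/
noncomputable def IdealTriangulation.kerGensMod {g p n : ℕ} (T : IdealTriangulation g p n)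
    (N : ℕ) (i : Fin p) : Fin n → ZMod N :=
  fun j => ((T.kerGens i j : ℤ) : ZMod N)

/-!
Summing over the corners `d` of the triangles, `σ(x, y) = ∑_d δx(d) y(λ(d))` with
`δx(d) = x(λ(φ²d)) - x(λ(φd))`, so `x` lies in the `N`-kernel iff `δx(d) + δx(αd) ≡ 0` for the two
corners `d, αd` on each edge. A vector `z = ∑ cᵢ kᵢ`, i.e. `z(λ(e)) = c(v(e)) + c(v(αe))`, passes
this test because `δz(d) = c(v(d)) - c(v(αd))` changes sign under `α`. Conversely, for a kernel
vector, `z(λ(d)) + z(λ(φ²d)) - z(λ(φd))` is invariant under the rotation `φα` about a puncture,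
hence equals `2c(v(d))` for some `c`; halving, which needs `N` odd, gives `z = ∑ cᵢ kᵢ`.
Since `∑ᵢ kᵢ = 2·(1, …, 1)`, the `kᵢ` span the same module as the given generators. A linear
relation among the generators makes `c ∘ v` invariant under `α` and `φ`, hence constant by
connectedness, and then zero.
-/

open Finset

section Counting

variable {D ι R : Type*} [DecidableEq ι] [Fintype ι] [CommRing R]

theorem sum_mul_card_filter (s : Finset D) (f : D → ι) (c : ι → R) :
    ∑ i, c i * (#{d ∈ s | f d = i} : R) = ∑ d ∈ s, c (f d) := by
  rw [← sum_fiberwise' s f c]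
  simp only [sum_const, nsmul_eq_mul, mul_comm]

variable [Fintype D]

theorem sum_sum_card_filter_mul (f h : D → ι) (F : ι → ι → R) :
    ∑ i, ∑ j, (#{d | f d = i ∧ h d = j} : R) * F i j = ∑ d, F (f d) (h d) := by
  rw [← sum_fiberwise univ f]
  refine sum_congr rfl fun i _ => ?_
  calc ∑ j, (#{d | f d = i ∧ h d = j} : R) * F i j
      = ∑ d with f d = i, F i (h d) := by
        rw [← sum_mul_card_filter]; simp only [filter_filter, mul_comm]
    _ = ∑ d with f d = i, F (f d) (h d) :=
        sum_congr rfl fun d hd => by rw [(mem_filter.1 hd).2]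

theorem forall_dvd_sum_mul_comp_iff (m : ℤ) (w : D → ℤ) (f : D → ι) :
    (∀ y : ι → ℤ, m ∣ ∑ d, w d * y (f d)) ↔ ∀ j, m ∣ ∑ d with f d = j, w d := by
  have fiberwise (y : ι → ℤ) : ∑ d, w d * y (f d) = ∑ j, (∑ d with f d = j, w d) * y j := by
    rw [← sum_fiberwise univ f]
    simp_rw [sum_mul]
    exact sum_congr rfl fun j _ => sum_congr rfl fun d hd => by rw [(mem_filter.1 hd).2]
  simp_rw [fiberwise]
  refine ⟨fun h j => by simpa using h fun i => if i = j then 1 else 0, fun h y => ?_⟩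
  exact dvd_sum fun j _ => (h j).mul_right _

end Counting

namespace IdealTriangulation

section Combinatorics

variable {g p n : ℕ} (T : IdealTriangulation g p n)

theorem edge_α (d : T.D) : T.edge (T.α d) = T.edge d :=
  ((T.edge_fiber d (T.α d)).2 (Or.inr rfl)).symm

theorem vert_φ (d : T.D) : T.vert (T.φ d) = T.vert (T.α d) := by
  simpa only [T.α_invol] using T.vert_rot (T.α d)

theorem filter_edge_eq (d : T.D) : ({e | T.edge e = T.edge d} : Finset T.D) = {d, T.α d} := by
  ext e
  simp only [mem_filter, mem_univ, true_and, mem_insert, mem_singleton]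
  rw [eq_comm, T.edge_fiber]

theorem sum_edge_fiber {M : Type*} [AddCommMonoid M] (F : T.D → M) (d : T.D) :
    ∑ e with T.edge e = T.edge d, F e = F d + F (T.α d) := by
  rw [filter_edge_eq, sum_pair fun h => T.α_fpf d h.symm]

theorem apply_eq_of_invariant {M : Type*} {F : T.D → M} (hα : ∀ d, F (T.α d) = F d)
    (hφ : ∀ d, F (T.φ d) = F d) (d d' : T.D) : F d = F d' := by
  obtain ⟨w, hw, rfl⟩ := T.connected d d'
  induction hw using Subgroup.closure_induction generalizing d with
  | mem w hw => rcases hw with rfl | rfl <;> simp [hα, hφ]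
  | one => rfl
  | mul w v _ _ hw hv => rw [Equiv.Perm.mul_apply, ← hw, ← hv]
  | inv w _ hw => simpa using (hw (w⁻¹ d)).symm

theorem exists_eq_comp_vert {M : Type*} {F : T.D → M} (hF : ∀ d, F (T.φ (T.α d)) = F d) :
    ∃ c : Fin p → M, ∀ d, F d = c (T.vert d) := by
  have orbit (k : ℕ) (d : T.D) : F (((T.α.trans T.φ) ^ k) d) = F d := by
    induction k with
    | zero => rfl
    | succ k ih => rw [pow_succ', Equiv.Perm.mul_apply, Equiv.trans_apply, hF, ih]
  refine ⟨fun i => F (T.vert_surj i).choose, fun d => ?_⟩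
  obtain ⟨k, hk⟩ := T.vert_orbit d _ (T.vert_surj (T.vert d)).choose_spec.symm
  exact (orbit k d).symm.trans (congrArg F hk)

theorem apply_vert_eq_of_add_eq {M : Type*} [AddCancelCommMonoid M] {c : Fin p → M} {a : M}
    (hc : ∀ e, c (T.vert e) + c (T.vert (T.α e)) = a) (d d' : T.D) :
    c (T.vert d) = c (T.vert d') := by
  have hφ (d : T.D) : c (T.vert (T.φ d)) = c (T.vert d) := by
    have h := (hc (T.φ d)).trans (hc (T.φ (T.φ d))).symm
    rwa [← vert_φ, ← vert_φ, T.φ_triangles, add_comm, add_left_cancel_iff] at h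
  exact T.apply_eq_of_invariant (F := c ∘ T.vert) (fun d => by simp [← vert_φ, hφ]) hφ d d'

end Combinatorics

section Kernel

variable {g p n : ℕ} (T : IdealTriangulation g p n) {M : Type*} [AddCommGroup M]

def dartDiff (z : Fin n → M) (d : T.D) : M :=
  z (T.edge (T.φ (T.φ d))) - z (T.edge (T.φ d))

/-- `σ(z, λⱼ) = 0` for every edge `λⱼ`, whose two corners are `d` and `α d`. -/
def InKernel (z : Fin n → M) : Prop :=
  ∀ d, T.dartDiff z d + T.dartDiff z (T.α d) = 0

theorem wpForm_eq_sum_dartDiff (x y : Fin n → ℤ) :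
    T.wpForm x y = ∑ d, T.dartDiff x d * y (T.edge d) := by
  calc T.wpForm x y
      = ∑ i, ∑ j, (T.spikeCount i j : ℤ) * (x i * y j)
          - ∑ i, ∑ j, (T.spikeCount i j : ℤ) * (x j * y i) := by
        rw [sum_comm (f := fun i j => (T.spikeCount i j : ℤ) * (x j * y i)), ← sum_sub_distrib]
        refine sum_congr rfl fun i _ => ?_
        rw [← sum_sub_distrib]
        refine sum_congr rfl fun j _ => ?_
        simp only [wpMatrix, Matrix.of_apply]
        ring
    _ = ∑ d, x (T.edge d) * y (T.edge (T.φ d)) - ∑ d, x (T.edge (T.φ d)) * y (T.edge d) := by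
        simp only [spikeCount, sum_sum_card_filter_mul]
    _ = ∑ d, T.dartDiff x d * y (T.edge d) := by
        simp only [dartDiff, sub_mul, sum_sub_distrib]
        rw [← Equiv.sum_comp T.φ fun d => x (T.edge (T.φ (T.φ d))) * y (T.edge d)]
        simp only [T.φ_triangles]

theorem dvd_wpForm_iff (N : ℕ) (x : Fin n → ℤ) :
    (∀ y, (N : ℤ) ∣ T.wpForm x y) ↔ T.InKernel fun j => (x j : ZMod N) := by
  simp_rw [wpForm_eq_sum_dartDiff, forall_dvd_sum_mul_comp_iff, T.edge_surj.forall,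
    sum_edge_fiber, ← ZMod.intCast_zmod_eq_zero_iff_dvd]
  simp [InKernel, dartDiff]

theorem dartDiff_of_edge_eq {z : Fin n → M} {c : Fin p → M}
    (hz : ∀ e, z (T.edge e) = c (T.vert e) + c (T.vert (T.α e))) (d : T.D) :
    T.dartDiff z d = c (T.vert d) - c (T.vert (T.α d)) := by
  simp only [dartDiff, hz, ← vert_φ, φ_triangles]
  abel

theorem inKernel_of_edge_eq {z : Fin n → M} {c : Fin p → M}
    (hz : ∀ e, z (T.edge e) = c (T.vert e) + c (T.vert (T.α e))) : T.InKernel z := by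
  intro d
  rw [T.dartDiff_of_edge_eq hz, T.dartDiff_of_edge_eq hz, T.α_invol]
  abel

def spikeSum (z : Fin n → M) (d : T.D) : M :=
  z (T.edge d) + z (T.edge (T.φ (T.φ d))) - z (T.edge (T.φ d))

theorem spikeSum_φ_α {z : Fin n → M} (hz : T.InKernel z) (d : T.D) :
    T.spikeSum z (T.φ (T.α d)) = T.spikeSum z d := by
  rw [← sub_eq_zero, ← neg_eq_zero, ← hz d]
  simp only [spikeSum, dartDiff, T.φ_triangles, T.edge_α]
  abel

theorem spikeSum_add_spikeSum_α {z : Fin n → M} (hz : T.InKernel z) (e : T.D) :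
    T.spikeSum z e + T.spikeSum z (T.α e) = 2 • z (T.edge e) := by
  rw [← sub_eq_zero, ← hz e]
  simp only [spikeSum, dartDiff, T.edge_α]
  abel

theorem exists_edge_eq_of_inKernel {R : Type*} [CommRing R] (h2 : IsUnit (2 : R))
    {z : Fin n → R} (hz : T.InKernel z) :
    ∃ c : Fin p → R, ∀ e, z (T.edge e) = c (T.vert e) + c (T.vert (T.α e)) := by
  obtain ⟨c, hc⟩ := T.exists_eq_comp_vert (T.spikeSum_φ_α hz)
  refine ⟨fun i => ↑h2.unit⁻¹ * c i, fun e => ?_⟩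
  rw [← mul_add, ← hc, ← hc, T.spikeSum_add_spikeSum_α hz, two_nsmul, ← two_mul, ← mul_assoc,
    h2.val_inv_mul, one_mul]

end Kernel

section EndVectors

variable {g p n : ℕ} (T : IdealTriangulation g p n) (R : Type*) [CommRing R]

noncomputable def endVec (i : Fin p) : Fin n → R :=
  fun j => T.endCount i j

theorem sum_smul_endVec_edge (c : Fin p → R) (e : T.D) :
    (∑ i, c i • T.endVec R i) (T.edge e) = c (T.vert e) + c (T.vert (T.α e)) := by
  simp only [Finset.sum_apply, Pi.smul_apply, smul_eq_mul, endVec, endCount]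
  rw [← T.sum_edge_fiber fun d => c (T.vert d), ← sum_mul_card_filter]
  simp only [filter_filter, and_comm]

theorem sum_endVec : ∑ i, T.endVec R i = 2 • 1 := by
  funext j
  obtain ⟨e, rfl⟩ := T.edge_surj j
  simpa [one_add_one_eq_two] using T.sum_smul_endVec_edge R 1 e

variable {R}

theorem mem_span_endVec_iff {z : Fin n → R} :
    z ∈ Submodule.span R (Set.range (T.endVec R)) ↔
      ∃ c : Fin p → R, ∀ e, z (T.edge e) = c (T.vert e) + c (T.vert (T.α e)) := by
  simp_rw [Submodule.mem_span_range_iff_exists_fun, funext_iff, T.edge_surj.forall,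
    sum_smul_endVec_edge, eq_comm]

end EndVectors

section Generators

variable {g q n : ℕ} (T : IdealTriangulation g (q + 1) n) {R : Type*} [CommRing R]

theorem cast_kerGens_castSucc (i : Fin q) :
    (fun j => (T.kerGens i.castSucc j : R)) = T.endVec R i.castSucc := by
  funext j
  simp [kerGens, endVec]

theorem cast_kerGens_last : (fun j => (T.kerGens (Fin.last q) j : R)) = 1 := by
  funext j
  simp [kerGens]

theorem span_kerGens_eq_span_endVec (h2 : IsUnit (2 : R)) :
    Submodule.span R (Set.range fun i j => (T.kerGens i j : R)) =
      Submodule.span R (Set.range (T.endVec R)) := by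
  set K := Submodule.span R (Set.range fun i j => (T.kerGens i j : R))
  set E := Submodule.span R (Set.range (T.endVec R))
  have kerGens_mem (i) : (fun j => (T.kerGens i j : R)) ∈ K :=
    Submodule.subset_span (Set.mem_range_self i)
  have endVec_mem (i) : T.endVec R i ∈ E := Submodule.subset_span (Set.mem_range_self i)
  have endVec_last := T.sum_endVec R
  rw [Fin.sum_univ_castSucc, ← eq_sub_iff_add_eq'] at endVec_last
  apply le_antisymm <;> rw [Submodule.span_le] <;> rintro _ ⟨i, rfl⟩ <;>
    induction i using Fin.lastCases
  · have one_eq : (1 : Fin n → R) = (↑h2.unit⁻¹ : R) • ∑ i, T.endVec R i := by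
      rw [T.sum_endVec, two_nsmul, ← two_smul R, smul_smul, h2.val_inv_mul, one_smul]
    dsimp only [SetLike.mem_coe]
    rw [T.cast_kerGens_last, one_eq]
    exact E.smul_mem _ (E.sum_mem fun i _ => endVec_mem i)
  · dsimp only [SetLike.mem_coe]
    rw [T.cast_kerGens_castSucc]
    exact endVec_mem _
  · rw [SetLike.mem_coe, endVec_last]
    refine K.sub_mem (nsmul_mem ?_ 2) (K.sum_mem fun i _ => ?_)
    · rw [← T.cast_kerGens_last]
      exact kerGens_mem _
    · rw [← T.cast_kerGens_castSucc]
      exact kerGens_mem _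
  · rw [SetLike.mem_coe, ← T.cast_kerGens_castSucc]
    exact kerGens_mem _

variable (R) in
theorem linearIndependent_kerGens : LinearIndependent R fun i j => (T.kerGens i j : R) := by
  rw [Fintype.linearIndependent_iff]
  intro f hf
  let c : Fin (q + 1) → R := Fin.lastCases 0 fun i => f i.castSucc
  have hcf : ∑ i, c i • T.endVec R i + f (Fin.last q) • 1 = 0 := by
    rw [Fin.sum_univ_castSucc] at hf ⊢
    simpa [c, T.cast_kerGens_castSucc, T.cast_kerGens_last] using hf
  have rel (e : T.D) : c (T.vert e) + c (T.vert (T.α e)) = -f (Fin.last q) := by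
    rw [← T.sum_smul_endVec_edge, eq_neg_iff_add_eq_zero]
    simpa using congrFun hcf (T.edge e)
  obtain ⟨d₀, hd₀⟩ := T.vert_surj (Fin.last q)
  have c_vert (d : T.D) : c (T.vert d) = 0 := by
    rw [T.apply_vert_eq_of_add_eq rel d d₀, hd₀]
    simp [c]
  have f_last : f (Fin.last q) = 0 := by
    simpa [c_vert] using rel d₀
  intro i
  induction i using Fin.lastCases with
  | last => exact f_last
  | cast i =>
    obtain ⟨d, hd⟩ := T.vert_surj i.castSucc
    simpa [c, hd] using c_vert d

end Generators

end IdealTriangulation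

theorem wpForm_N_kernel_general (g p n N : ℕ) (hp : 1 ≤ p) (hN : Odd N)
    (T : IdealTriangulation g p n) :
    LinearIndependent (ZMod N) (T.kerGensMod N) ∧
      {x : Fin n → ℤ | ∀ y : Fin n → ℤ, (N : ℤ) ∣ T.wpForm x y}
        = (fun x : Fin n → ℤ => fun j => ((x j : ℤ) : ZMod N)) ⁻¹'
            (Submodule.span (ZMod N) (Set.range (T.kerGensMod N)) : Set (Fin n → ZMod N)) := by
  obtain ⟨q, rfl⟩ : ∃ q, p = q + 1 := ⟨p - 1, by omega⟩
  have h2 : IsUnit (2 : ZMod N) := by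
    simpa using (ZMod.isUnit_iff_coprime 2 N).2 (Nat.coprime_two_left.2 hN)
  refine ⟨T.linearIndependent_kerGens (ZMod N), Set.ext fun x => ?_⟩
  rw [Set.mem_ofPred_eq, T.dvd_wpForm_iff, Set.mem_preimage, SetLike.mem_coe]
  unfold IdealTriangulation.kerGensMod
  rw [T.span_kerGens_eq_span_endVec h2, T.mem_span_endVec_iff]
  exact ⟨T.exists_edge_eq_of_inKernel h2, fun ⟨_, hc⟩ => T.inKernel_of_edge_eq hc⟩

/-- For `N` odd, the `N`-kernel `Ker_N σ = {α : ∀ β, σ(α,β) ∈ Nℤ}` of the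
Weil–Petersson form of an ideal triangulation equals the preimage in `ℤⁿ` of the
`ℤ/N`-submodule of `(ℤ/N)ⁿ` freely generated by the reductions of `(1,1,…,1)` and of
`(k_{i1},…,k_{in})` for `i = 1, …, p-1`. -/
theorem wpForm_N_kernel (g p n N : ℕ) (hp : 1 ≤ p) (hN : Odd N) (hN0 : 0 < N)
    (T : IdealTriangulation g p n) :
    LinearIndependent (ZMod N) (T.kerGensMod N) ∧
      {x : Fin n → ℤ | ∀ y : Fin n → ℤ, (N : ℤ) ∣ T.wpForm x y}
        = (fun x : Fin n → ℤ => fun j => ((x j : ℤ) : ZMod N)) ⁻¹'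
            (Submodule.span (ZMod N) (Set.range (T.kerGensMod N)) : Set (Fin n → ZMod N)) :=
  wpForm_N_kernel_general g p n N hp hN T
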